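/- (Coverage preservation of rearranged confidence bands.) Let ℓ, u, f : [0,1]^d → ℝ be bounded measurable with ℓ(x) ≤ f(x) ≤ u(x) for all x. Let ℓ*, u*, f* denote their π-rearrangements for a fixed permutation π. Then ℓ*(x) ≤ f*(x) ≤ u*(x) for all x ∈ [0,1]^d; in particular, if f is weakly increasing then f* = f almost everywhere and the rearranged band [ℓ*, u*] covers f. -/

import Mathlib

open MeasureTheory

/-- Increasing rearrangement with respect to the `j`-th coordinate. -/
noncomputable def rearrCoord {d : ℕ} (j : Fin d) (f : (Fin d → ℝ) → ℝ)
    (x : Fin d → ℝ) : ℝ :=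
  sInf {y : ℝ | x j ≤
    (volume (Set.Icc (0:ℝ) 1 ∩ {t : ℝ | f (Function.update x j t) ≤ y})).toReal}

/-- The `π`-rearrangement `R_{π₁} ∘ ⋯ ∘ R_{π_d}`. -/
noncomputable def rearrPerm {d : ℕ} (π : Equiv.Perm (Fin d))
    (f : (Fin d → ℝ) → ℝ) : (Fin d → ℝ) → ℝ :=
  (List.ofFn (fun i => π i)).foldr (fun j g => rearrCoord j g) f

/-!
Each coordinate rearrangement is the quantile function of the section `t ↦ g (x[j ↦ t])` on
`[0,1]`. Pointwise order between sections reverses the order of their distribution functions,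
hence preserves the order of their quantiles; iterating over the coordinates gives
`ℓ* ≤ f* ≤ u*`.

If `f` is monotone, so is every partial rearrangement on `(0,1]^d`, and the quantile of a
monotone section at `s` lies between its values at any `r < s` and at `s`. Hence
`f x' ≤ f* x ≤ f x` whenever `x'` lies strictly below `x` in every coordinate, and it remains to
see that a bounded monotone `f` is a.e. the supremum of its values strictly below `x`. Outside a
boundary layer of volume `1 - (1 - δ)^d`, the points where `f` jumps by `ε` lie in the set where
`f x - f (x - δ𝟙) ≥ ε`. By Markov's inequality its volume is at most `2M (1 - (1 - δ)^d) / ε`,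
because the integral of `f x - f (x - δ𝟙)` over `[δ,1]^d` is a difference of integrals over two
cubes that differ only by such layers.
-/

open Set Filter Topology

noncomputable def distribFun (φ : ℝ → ℝ) (y : ℝ) : ℝ :=
  volume.real (Icc (0 : ℝ) 1 ∩ {t | φ t ≤ y})

noncomputable def quantile (φ : ℝ → ℝ) (s : ℝ) : ℝ :=
  sInf {y | s ≤ distribFun φ y}

section Quantile

variable {φ ψ : ℝ → ℝ} {s s' y m M : ℝ}

lemma distribFun_eq_Ioc (φ : ℝ → ℝ) (y : ℝ) :
    distribFun φ y = volume.real (Ioc (0 : ℝ) 1 ∩ {t | φ t ≤ y}) :=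
  measureReal_congr (Ioc_ae_eq_Icc.symm.inter (ae_eq_refl _))

lemma volume_Ioc_inter_ne_top (A : Set ℝ) : volume (Ioc (0 : ℝ) 1 ∩ A) ≠ ⊤ :=
  ((measure_mono inter_subset_left).trans_lt measure_Ioc_lt_top).ne

lemma le_distribFun {a : ℝ} (ha : a ≤ 1) (h : ∀ t ∈ Ioc 0 a, φ t ≤ y) :
    a ≤ distribFun φ y := by
  rw [distribFun_eq_Ioc]
  calc a ≤ volume.real (Ioc (0 : ℝ) a) := by simp
    _ ≤ volume.real (Ioc (0 : ℝ) 1 ∩ {t | φ t ≤ y}) :=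
        measureReal_mono (fun t ht => ⟨⟨ht.1, ht.2.trans ha⟩, h t ht⟩)
        (volume_Ioc_inter_ne_top _)

lemma distribFun_le {r : ℝ} (hr : 0 ≤ r) (h : ∀ t ∈ Ioc r 1, y < φ t) :
    distribFun φ y ≤ r := by
  rw [distribFun_eq_Ioc]
  calc _ ≤ volume.real (Ioc (0 : ℝ) r) :=
        measureReal_mono (fun t (⟨ht, hφt⟩ : t ∈ Ioc 0 1 ∩ {t | φ t ≤ y}) =>
          ⟨ht.1, not_lt.1 fun hrt => (h t ⟨hrt, ht.2⟩).not_ge hφt⟩) measure_Ioc_lt_top.ne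
    _ = r := by simp [hr]

lemma distribFun_le_distribFun (h : ∀ t ∈ Ioc 0 1, φ t ≤ ψ t) :
    distribFun ψ y ≤ distribFun φ y := by
  simp only [distribFun_eq_Ioc]
  exact measureReal_mono (fun t ⟨ht, hψt⟩ => ⟨ht, (h t ht).trans hψt⟩)
    (volume_Ioc_inter_ne_top _)

-- The junk value `sInf univ = 0` at `s = 0` is why the rearrangements of a monotone function are
-- only monotone on `(0,1]^d`.
lemma quantile_zero (φ : ℝ → ℝ) : quantile φ 0 = 0 := by
  simp [quantile, distribFun]

lemma bddBelow_quantileSet (hs : 0 < s) (hm : ∀ t ∈ Ioc 0 1, m ≤ φ t) :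
    BddBelow {y | s ≤ distribFun φ y} := by
  refine ⟨m, fun y hy => not_lt.1 fun hym => ?_⟩
  have := distribFun_le le_rfl fun t ht => hym.trans_le (hm t ht)
  exact (hs.trans_le hy).not_ge this

lemma mem_quantileSet (hs : s ≤ 1) (hM : ∀ t ∈ Ioc 0 1, φ t ≤ M) :
    M ∈ {y | s ≤ distribFun φ y} :=
  le_distribFun hs fun t ht => hM t ⟨ht.1, ht.2.trans hs⟩

lemma quantile_le (hs : 0 < s) (hs1 : s ≤ 1) (hm : ∀ t ∈ Ioc 0 1, m ≤ φ t)
    (h : ∀ t ∈ Ioc 0 s, φ t ≤ y) : quantile φ s ≤ y :=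
  csInf_le (bddBelow_quantileSet hs hm) (le_distribFun hs1 h)

lemma le_quantile {r : ℝ} (hr : 0 ≤ r) (hrs : r < s) (hs1 : s ≤ 1)
    (hM : ∀ t ∈ Ioc 0 1, φ t ≤ M) (h : ∀ t ∈ Ioc r 1, y ≤ φ t) : y ≤ quantile φ s := by
  refine le_csInf ⟨M, mem_quantileSet hs1 hM⟩ fun z hz => not_lt.1 fun hzy => ?_
  have := distribFun_le hr fun t ht => hzy.trans_le (h t ht)
  exact (hrs.trans_le (hz.trans this)).false

lemma quantile_le_quantile (hs : 0 < s) (hss' : s ≤ s') (hs' : s' ≤ 1)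
    (hm : ∀ t ∈ Ioc 0 1, m ≤ φ t) (hM : ∀ t ∈ Ioc 0 1, ψ t ≤ M)
    (h : ∀ t ∈ Ioc 0 1, φ t ≤ ψ t) : quantile φ s ≤ quantile ψ s' :=
  csInf_le_csInf (bddBelow_quantileSet hs hm) ⟨M, mem_quantileSet hs' hM⟩
    fun _ hy => hss'.trans (hy.trans (distribFun_le_distribFun h))

lemma abs_quantile_le (hs : s ∈ Icc 0 1) (h : ∀ t ∈ Ioc 0 1, |φ t| ≤ M) :
    |quantile φ s| ≤ M := by
  rcases hs.1.eq_or_lt with rfl | hs0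
  · simpa [quantile_zero] using (abs_nonneg _).trans (h 1 ⟨one_pos, le_rfl⟩)
  · exact abs_le.2 ⟨le_quantile le_rfl hs0 hs.2 (fun t ht => (abs_le.1 (h t ht)).2)
      fun t ht => (abs_le.1 (h t ht)).1,
      quantile_le hs0 hs.2 (fun t ht => (abs_le.1 (h t ht)).1)
        fun t ht => (abs_le.1 (h t ⟨ht.1, ht.2.trans hs.2⟩)).2⟩

end Quantile

section UnitCube

variable {d : ℕ}

lemma update_mem_Icc {x : Fin d → ℝ} (hx : x ∈ Icc 0 1) (j : Fin d) {t : ℝ}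
    (ht : t ∈ Icc (0 : ℝ) 1) : Function.update x j t ∈ Icc (0 : Fin d → ℝ) 1 := by
  simp only [← pi_univ_Icc, Pi.zero_apply, Pi.one_apply] at hx ⊢
  exact (update_mem_pi_iff_of_mem hx).2 fun _ => ht

lemma update_mem_univ_pi_Ioc {x : Fin d → ℝ} (hx : x ∈ univ.pi fun _ => Ioc (0 : ℝ) 1)
    (j : Fin d) {t : ℝ} (ht : t ∈ Ioc (0 : ℝ) 1) :
    Function.update x j t ∈ univ.pi fun _ => Ioc (0 : ℝ) 1 :=
  (update_mem_pi_iff_of_mem hx).2 fun _ => ht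

lemma univ_pi_Ioc_subset_Icc :
    (univ.pi fun _ => Ioc (0 : ℝ) 1) ⊆ Icc (0 : Fin d → ℝ) 1 := by
  simp only [← pi_univ_Icc, Pi.zero_apply, Pi.one_apply]
  exact pi_mono fun _ _ => Ioc_subset_Icc_self

lemma ae_restrict_unitCube_mem_univ_pi_Ioc :
    ∀ᵐ x ∂volume.restrict (Icc (0 : Fin d → ℝ) 1), x ∈ univ.pi fun _ => Ioc (0 : ℝ) 1 := by
  have hae : (univ.pi fun _ => Ioc (0 : ℝ) 1) =ᵐ[volume] Icc (0 : Fin d → ℝ) 1 :=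
    Measure.univ_pi_Ioc_ae_eq_Icc
  rw [← Measure.restrict_congr_set hae]
  exact ae_restrict_mem (MeasurableSet.univ_pi fun _ => measurableSet_Ioc)

lemma volume_ne_top_of_subset_unitCube {s : Set (Fin d → ℝ)} (hs : s ⊆ Icc 0 1) :
    volume s ≠ ⊤ :=
  measure_ne_top_of_subset hs isCompact_Icc.measure_lt_top.ne

lemma volume_real_Icc_const {a b : ℝ} (hab : a ≤ b) :
    volume.real (Icc (fun _ : Fin d => a) fun _ => b) = (b - a) ^ d := by
  simp [measureReal_def, Real.volume_Icc_pi_toReal fun _ => hab]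

lemma volume_real_unitCube_sdiff_Icc_const {a b : ℝ} (ha : 0 ≤ a) (hab : a ≤ b) (hb : b ≤ 1) :
    volume.real (Icc (0 : Fin d → ℝ) 1 \ Icc (fun _ => a) fun _ => b) = 1 - (b - a) ^ d := by
  rw [measureReal_sdiff (Icc_subset_Icc (fun _ => ha) fun _ => hb) measurableSet_Icc
    (volume_ne_top_of_subset_unitCube subset_rfl), volume_real_Icc_const hab]
  have hcube : volume.real (Icc (0 : Fin d → ℝ) 1) = 1 :=
    (volume_real_Icc_const (d := d) zero_le_one).trans (by norm_num)
  rw [hcube]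

end UnitCube

noncomputable def rearrList {d : ℕ} (L : List (Fin d)) (f : (Fin d → ℝ) → ℝ) :
    (Fin d → ℝ) → ℝ :=
  L.foldr (fun j g => rearrCoord j g) f

section Rearrangement

variable {d : ℕ} {j : Fin d} {f g g₁ g₂ : (Fin d → ℝ) → ℝ} {M M₁ M₂ : ℝ} {x : Fin d → ℝ}

lemma rearrCoord_eq_quantile (j : Fin d) (g : (Fin d → ℝ) → ℝ) (x : Fin d → ℝ) :
    rearrCoord j g x = quantile (fun t => g (Function.update x j t)) (x j) :=
  rfl

lemma abs_rearrCoord_le (hb : ∀ z ∈ Icc 0 1, |g z| ≤ M) (hx : x ∈ Icc 0 1) :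
    |rearrCoord j g x| ≤ M :=
  abs_quantile_le ⟨hx.1 j, hx.2 j⟩ fun _ ht => hb _ (update_mem_Icc hx j (Ioc_subset_Icc_self ht))

lemma rearrCoord_le_rearrCoord (hb₁ : ∀ z ∈ Icc 0 1, |g₁ z| ≤ M₁)
    (hb₂ : ∀ z ∈ Icc 0 1, |g₂ z| ≤ M₂) (h : ∀ z ∈ Icc 0 1, g₁ z ≤ g₂ z) (hx : x ∈ Icc 0 1) :
    rearrCoord j g₁ x ≤ rearrCoord j g₂ x := by
  have hsec : ∀ t ∈ Ioc (0 : ℝ) 1, Function.update x j t ∈ Icc 0 1 :=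
    fun _ ht => update_mem_Icc hx j (Ioc_subset_Icc_self ht)
  rcases (hx.1 j).eq_or_lt with h0 | h0
  · simp only [rearrCoord_eq_quantile, ← h0, Pi.zero_apply, quantile_zero, le_refl]
  · exact quantile_le_quantile h0 le_rfl (hx.2 j)
      (fun t ht => (abs_le.1 (hb₁ _ (hsec t ht))).1) (fun t ht => (abs_le.1 (hb₂ _ (hsec t ht))).2)
      fun t ht => h _ (hsec t ht)

lemma abs_rearrList_le (hb : ∀ z ∈ Icc 0 1, |f z| ≤ M) (L : List (Fin d)) :
    ∀ x ∈ Icc 0 1, |rearrList L f x| ≤ M := by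
  induction L with
  | nil => exact hb
  | cons j L ih => exact fun x hx => abs_rearrCoord_le ih hx

lemma rearrList_le_rearrList (hb₁ : ∀ z ∈ Icc 0 1, |g₁ z| ≤ M₁)
    (hb₂ : ∀ z ∈ Icc 0 1, |g₂ z| ≤ M₂) (h : ∀ z ∈ Icc 0 1, g₁ z ≤ g₂ z) (L : List (Fin d)) :
    ∀ x ∈ Icc 0 1, rearrList L g₁ x ≤ rearrList L g₂ x := by
  induction L with
  | nil => exact h
  | cons j L ih =>
    exact fun x hx => rearrCoord_le_rearrCoord (abs_rearrList_le hb₁ L)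
      (abs_rearrList_le hb₂ L) ih hx

lemma monotoneOn_rearrCoord (hg : MonotoneOn g (univ.pi fun _ => Ioc 0 1))
    (hb : ∀ z ∈ Icc 0 1, |g z| ≤ M) :
    MonotoneOn (rearrCoord j g) (univ.pi fun _ => Ioc 0 1) := by
  intro x hx x' hx' hxx'
  have hsec : ∀ t ∈ Ioc (0 : ℝ) 1, |g (Function.update x j t)| ≤ M :=
    fun t ht => hb _ (univ_pi_Ioc_subset_Icc (update_mem_univ_pi_Ioc hx j ht))
  have hsec' : ∀ t ∈ Ioc (0 : ℝ) 1, |g (Function.update x' j t)| ≤ M :=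
    fun t ht => hb _ (univ_pi_Ioc_subset_Icc (update_mem_univ_pi_Ioc hx' j ht))
  exact quantile_le_quantile (hx j trivial).1 (hxx' j) (hx' j trivial).2
    (fun t ht => (abs_le.1 (hsec t ht)).1) (fun t ht => (abs_le.1 (hsec' t ht)).2)
    fun t ht => hg (update_mem_univ_pi_Ioc hx j ht) (update_mem_univ_pi_Ioc hx' j ht)
      (update_le_update_iff.2 ⟨le_rfl, fun k _ => hxx' k⟩)

lemma rearrCoord_le_self (hg : MonotoneOn g (univ.pi fun _ => Ioc 0 1))
    (hb : ∀ z ∈ Icc 0 1, |g z| ≤ M) (hx : x ∈ univ.pi fun _ => Ioc 0 1) :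
    rearrCoord j g x ≤ g x :=
  quantile_le (hx j trivial).1 (hx j trivial).2
    (fun _ ht => (abs_le.1 (hb _ (univ_pi_Ioc_subset_Icc (update_mem_univ_pi_Ioc hx j ht)))).1)
    fun _ ht => hg (update_mem_univ_pi_Ioc hx j ⟨ht.1, ht.2.trans (hx j trivial).2⟩) hx
      (update_le_self_iff.2 ht.2)

lemma le_rearrCoord (hg : MonotoneOn g (univ.pi fun _ => Ioc 0 1))
    (hb : ∀ z ∈ Icc 0 1, |g z| ≤ M) (hx : x ∈ univ.pi fun _ => Ioc 0 1) {r : ℝ}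
    (hr : r ∈ Ioo 0 (x j)) : g (Function.update x j r) ≤ rearrCoord j g x :=
  le_quantile hr.1.le hr.2 (hx j trivial).2
    (fun _ ht => (abs_le.1 (hb _ (univ_pi_Ioc_subset_Icc (update_mem_univ_pi_Ioc hx j ht)))).2)
    fun _ ht => hg (update_mem_univ_pi_Ioc hx j ⟨hr.1, hr.2.le.trans (hx j trivial).2⟩)
      (update_mem_univ_pi_Ioc hx j ⟨hr.1.trans ht.1, ht.2⟩) (update_le_update_iff'.2 ht.1.le)

lemma monotoneOn_rearrList (hf : MonotoneOn f (univ.pi fun _ => Ioc 0 1))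
    (hb : ∀ z ∈ Icc 0 1, |f z| ≤ M) (L : List (Fin d)) :
    MonotoneOn (rearrList L f) (univ.pi fun _ => Ioc 0 1) := by
  induction L with
  | nil => exact hf
  | cons j L ih => exact monotoneOn_rearrCoord ih (abs_rearrList_le hb L)

lemma rearrList_le_self (hf : MonotoneOn f (univ.pi fun _ => Ioc 0 1))
    (hb : ∀ z ∈ Icc 0 1, |f z| ≤ M) (L : List (Fin d)) (hx : x ∈ univ.pi fun _ => Ioc 0 1) :
    rearrList L f x ≤ f x := by
  induction L with
  | nil => exact le_rfl
  | cons j L ih =>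
    exact (rearrCoord_le_self (monotoneOn_rearrList hf hb L) (abs_rearrList_le hb L) hx).trans ih

lemma le_rearrList (hf : MonotoneOn f (Icc 0 1)) (hb : ∀ z ∈ Icc 0 1, |f z| ≤ M)
    (L : List (Fin d)) {x' : Fin d → ℝ} (hx' : x' ∈ Icc 0 1) (hx'x : x' ≤ x)
    (hlt : ∀ k ∈ L, x' k < x k) (hx : x ∈ univ.pi fun _ => Ioc 0 1) :
    f x' ≤ rearrList L f x := by
  induction L generalizing x with
  | nil => exact hf hx' (univ_pi_Ioc_subset_Icc hx) hx'x
  | cons j L ih =>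
    obtain ⟨r, hx'r, hrx⟩ := exists_between (hlt j List.mem_cons_self)
    have hr : r ∈ Ioo 0 (x j) := ⟨(hx'.1 j).trans_lt hx'r, hrx⟩
    have hz : Function.update x j r ∈ univ.pi fun _ => Ioc 0 1 :=
      update_mem_univ_pi_Ioc hx j ⟨hr.1, hrx.le.trans (hx j trivial).2⟩
    have hx'z : x' ≤ Function.update x j r := le_update_iff.2 ⟨hx'r.le, fun k _ => hx'x k⟩
    have hltz : ∀ k ∈ L, x' k < Function.update x j r k := by
      intro k hk
      rcases eq_or_ne k j with rfl | hkj
      · simpa using hx'r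
      · simpa [hkj] using hlt k (List.mem_cons_of_mem j hk)
    exact (ih hx'z hltz hz).trans (le_rearrCoord
      (monotoneOn_rearrList (hf.mono univ_pi_Ioc_subset_Icc) hb L) (abs_rearrList_le hb L) hx hr)

end Rearrangement

lemma setIntegral_sub_setIntegral_le {α : Type*} [MeasurableSpace α] {μ : Measure α}
    {f : α → ℝ} {s t : Set α} {M : ℝ} (hs : MeasurableSet s) (ht : MeasurableSet t)
    (hfs : IntegrableOn f s μ) (hft : IntegrableOn f t μ) (hμs : μ s ≠ ⊤) (hμt : μ t ≠ ⊤)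
    (hM : ∀ x ∈ s ∪ t, |f x| ≤ M) :
    ∫ x in s, f x ∂μ - ∫ x in t, f x ∂μ ≤ M * (μ.real (s \ t) + μ.real (t \ s)) := by
  rw [← integral_inter_add_sdiff ht hfs, ← integral_inter_add_sdiff hs hft, inter_comm t s]
  have hst := norm_setIntegral_le_of_norm_le_const (μ := μ) (f := f) (s := s \ t)
    ((measure_mono sdiff_subset).trans_lt hμs.lt_top) fun x hx => hM x (Or.inl hx.1)
  have hts := norm_setIntegral_le_of_norm_le_const (μ := μ) (f := f) (s := t \ s)
    ((measure_mono sdiff_subset).trans_lt hμt.lt_top) fun x hx => hM x (Or.inr hx.1)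
  rw [Real.norm_eq_abs] at hst hts
  linarith [le_abs_self (∫ x in s \ t, f x ∂μ), neg_abs_le (∫ x in t \ s, f x ∂μ)]

section JumpSet

variable {d : ℕ} {f : (Fin d → ℝ) → ℝ} {M δ ε : ℝ}

lemma integrableOn_unitCube (hfm : Measurable f) (hb : ∀ z ∈ Icc 0 1, |f z| ≤ M) :
    IntegrableOn f (Icc 0 1) :=
  Measure.integrableOn_of_bounded (volume_ne_top_of_subset_unitCube subset_rfl)
    hfm.aestronglyMeasurable (ae_restrict_of_forall_mem measurableSet_Icc hb)

lemma sub_const_mem_Icc_iff {x : Fin d → ℝ} :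
    x - (fun _ => δ) ∈ Icc (fun _ => 0) (fun _ => 1 - δ) ↔ x ∈ Icc (fun _ : Fin d => δ) 1 := by
  simp only [mem_Icc, Pi.le_def, Pi.sub_apply, Pi.one_apply, sub_nonneg, sub_le_sub_iff_right]

lemma integrableOn_sub_comp_sub_const (hfm : Measurable f) (hb : ∀ z ∈ Icc 0 1, |f z| ≤ M)
    (hδ0 : 0 ≤ δ) :
    IntegrableOn (fun x => f (x - fun _ => δ)) (Icc (fun _ : Fin d => δ) 1) :=
  Measure.integrableOn_of_bounded
    (volume_ne_top_of_subset_unitCube (Icc_subset_Icc (fun _ => hδ0) le_rfl))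
    (hfm.comp (measurable_id.sub_const _)).aestronglyMeasurable
    (ae_restrict_of_forall_mem measurableSet_Icc fun x hx => hb _ <|
      Icc_subset_Icc le_rfl (fun _ => by simpa using hδ0) (sub_const_mem_Icc_iff.2 hx))

lemma integral_sub_comp_sub_const_le (hfm : Measurable f) (hb : ∀ z ∈ Icc 0 1, |f z| ≤ M)
    (hδ0 : 0 ≤ δ) (hδ1 : δ ≤ 1) :
    ∫ x in Icc (fun _ : Fin d => δ) 1, (f x - f (x - fun _ => δ)) ≤ 2 * M * (1 - (1 - δ) ^ d) := by
  set c : Fin d → ℝ := fun _ => δ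
  set S : Set (Fin d → ℝ) := Icc c 1
  set T : Set (Fin d → ℝ) := Icc (fun _ => 0) fun _ => 1 - δ
  have hS : S ⊆ Icc 0 1 := Icc_subset_Icc (fun _ => hδ0) le_rfl
  have hT : T ⊆ Icc 0 1 := Icc_subset_Icc le_rfl fun _ => by simpa using hδ0
  have hM : 0 ≤ M := (abs_nonneg _).trans (hb 0 ⟨le_rfl, zero_le_one⟩)
  have hint := integrableOn_unitCube hfm hb
  have hshift : ∫ x in S, f (x - c) = ∫ x in T, f x := by
    have hpre : (fun x => x - c) ⁻¹' T = S := ext fun _ => sub_const_mem_Icc_iff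
    rw [← (measurePreserving_sub_right volume c).setIntegral_preimage_emb
      (MeasurableEquiv.subRight c).measurableEmbedding f T, hpre]
  have hint_shift := integrableOn_sub_comp_sub_const hfm hb hδ0
  calc ∫ x in S, (f x - f (x - c)) = (∫ x in S, f x) - ∫ x in T, f x := by
        rw [integral_sub (hint.mono_set hS) hint_shift, hshift]
    _ ≤ M * (volume.real (S \ T) + volume.real (T \ S)) :=
        setIntegral_sub_setIntegral_le measurableSet_Icc measurableSet_Icc
          (hint.mono_set hS) (hint.mono_set hT)
          (volume_ne_top_of_subset_unitCube hS) (volume_ne_top_of_subset_unitCube hT)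
          fun x hx => hb x (union_subset hS hT hx)
    _ ≤ M * (volume.real (Icc 0 1 \ T) + volume.real (Icc 0 1 \ S)) := by
        gcongr ?_ * (?_ + ?_)
        · exact measureReal_mono (sdiff_subset_sdiff_left hS)
            (volume_ne_top_of_subset_unitCube sdiff_subset)
        · exact measureReal_mono (sdiff_subset_sdiff_left hT)
            (volume_ne_top_of_subset_unitCube sdiff_subset)
    _ = 2 * M * (1 - (1 - δ) ^ d) := by
        have hvolS : volume.real (Icc 0 1 \ S) = 1 - (1 - δ) ^ d :=
          volume_real_unitCube_sdiff_Icc_const hδ0 hδ1 le_rfl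
        rw [volume_real_unitCube_sdiff_Icc_const le_rfl (by linarith) (by linarith), hvolS]
        ring

def jumpSet (f : (Fin d → ℝ) → ℝ) (ε : ℝ) : Set (Fin d → ℝ) :=
  {x ∈ Icc 0 1 | ∀ x' ∈ Icc 0 1, (∀ k, x' k < x k) → f x' ≤ f x - ε}

lemma volume_real_jumpSet_le (hf : MonotoneOn f (Icc 0 1)) (hfm : Measurable f)
    (hb : ∀ z ∈ Icc 0 1, |f z| ≤ M) (hε : 0 < ε) (hδ0 : 0 < δ) (hδ1 : δ ≤ 1) :
    volume.real (jumpSet f ε) ≤ (1 - (1 - δ) ^ d) * (1 + 2 * M / ε) := by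
  set c : Fin d → ℝ := fun _ => δ
  set S : Set (Fin d → ℝ) := Icc c 1
  set C : Set (Fin d → ℝ) := {x | ε ≤ f x - f (x - c)}
  have hS : S ⊆ Icc 0 1 := Icc_subset_Icc (fun _ => hδ0.le) le_rfl
  have hshift_mem : ∀ x ∈ S, x - c ∈ Icc 0 1 := fun x hx =>
    Icc_subset_Icc le_rfl (fun _ => by simpa using hδ0.le) (sub_const_mem_Icc_iff.2 hx)
  have hsub : jumpSet f ε ⊆ (Icc 0 1 \ S) ∪ (S ∩ C) := by
    rintro x ⟨hx, hjump⟩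
    by_cases hxS : x ∈ S
    · have := hjump (x - c) (hshift_mem x hxS) fun k => by simpa [c] using hδ0
      exact Or.inr ⟨hxS, by simp only [C, mem_ofPred_eq]; linarith⟩
    · exact Or.inl ⟨hx, hxS⟩
  have hmarkov : ε * volume.real (S ∩ C) ≤ 2 * M * (1 - (1 - δ) ^ d) := by
    have hC : MeasurableSet C :=
      measurableSet_le measurable_const (hfm.sub (hfm.comp (measurable_id.sub_const c)))
    have hnonneg : 0 ≤ᵐ[volume.restrict S] fun x => f x - f (x - c) :=
      ae_restrict_of_forall_mem measurableSet_Icc fun x hx => sub_nonneg.2 <|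
        hf (hshift_mem x hx) (hS hx) fun k => by simpa [c] using hδ0.le
    have := mul_meas_ge_le_integral_of_nonneg hnonneg
      (((integrableOn_unitCube hfm hb).mono_set hS).sub
        (integrableOn_sub_comp_sub_const hfm hb hδ0.le)) ε
    rw [measureReal_restrict_apply hC, inter_comm] at this
    exact this.trans (integral_sub_comp_sub_const_le hfm hb hδ0.le hδ1)
  calc volume.real (jumpSet f ε) ≤ volume.real ((Icc 0 1 \ S) ∪ (S ∩ C)) :=
        measureReal_mono hsub <| volume_ne_top_of_subset_unitCube <|
          union_subset sdiff_subset (inter_subset_left.trans hS)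
    _ ≤ volume.real (Icc 0 1 \ S) + volume.real (S ∩ C) := measureReal_union_le _ _
    _ ≤ (1 - (1 - δ) ^ d) + 2 * M * (1 - (1 - δ) ^ d) / ε := by
        gcongr
        · exact (volume_real_unitCube_sdiff_Icc_const hδ0.le hδ1 le_rfl).le
        · rw [le_div_iff₀ hε, mul_comm]
          exact hmarkov
    _ = (1 - (1 - δ) ^ d) * (1 + 2 * M / ε) := by ring

lemma volume_jumpSet_eq_zero (hf : MonotoneOn f (Icc 0 1)) (hfm : Measurable f)
    (hb : ∀ z ∈ Icc 0 1, |f z| ≤ M) (hε : 0 < ε) : volume (jumpSet f ε) = 0 := by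
  have hfin : volume (jumpSet f ε) ≠ ⊤ := volume_ne_top_of_subset_unitCube (sep_subset _ _)
  rw [← measureReal_eq_zero_iff hfin]
  have hlim : Tendsto (fun δ : ℝ => (1 - (1 - δ) ^ d) * (1 + 2 * M / ε)) (𝓝[>] 0) (𝓝 0) := by
    have hcont : Continuous fun δ : ℝ => (1 - (1 - δ) ^ d) * (1 + 2 * M / ε) := by fun_prop
    simpa using (hcont.tendsto 0).mono_left nhdsWithin_le_nhds
  refine le_antisymm (ge_of_tendsto hlim ?_) measureReal_nonneg
  filter_upwards [Ioo_mem_nhdsGT one_pos] with δ hδ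
  exact volume_real_jumpSet_le hf hfm hb hε hδ.1 hδ.2.le

lemma MonotoneOn.ae_exists_strictlyBelow_gt (hf : MonotoneOn f (Icc 0 1)) (hfm : Measurable f)
    (hb : ∀ z ∈ Icc 0 1, |f z| ≤ M) :
    ∀ᵐ x ∂volume.restrict (Icc 0 1), ∀ y < f x, ∃ x' ∈ Icc 0 1, (∀ k, x' k < x k) ∧ y < f x' := by
  rw [ae_restrict_iff' measurableSet_Icc, ae_iff]
  refine measure_mono_null (fun x hx => ?_) <| measure_iUnion_null fun n : ℕ =>
    volume_jumpSet_eq_zero hf hfm hb (Nat.one_div_pos_of_nat (n := n))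
  rw [mem_ofPred_eq] at hx
  push Not at hx
  obtain ⟨hx, y, hy, hjump⟩ := hx
  obtain ⟨n, hn⟩ := exists_nat_one_div_lt (sub_pos.2 hy)
  exact mem_iUnion.2 ⟨n, hx, fun x' hx' hlt => (hjump x' hx' hlt).trans (by linarith)⟩

end JumpSet

theorem rearranged_band_coverage_general {d : ℕ} (π : Equiv.Perm (Fin d))
    (l u f : (Fin d → ℝ) → ℝ)
    (hfm : Measurable f)
    (hlb : ∃ M : ℝ, ∀ x ∈ Set.Icc (0 : Fin d → ℝ) 1, |l x| ≤ M)
    (hub : ∃ M : ℝ, ∀ x ∈ Set.Icc (0 : Fin d → ℝ) 1, |u x| ≤ M)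
    (hfb : ∃ M : ℝ, ∀ x ∈ Set.Icc (0 : Fin d → ℝ) 1, |f x| ≤ M)
    (hcov : ∀ x ∈ Set.Icc (0 : Fin d → ℝ) 1, l x ≤ f x ∧ f x ≤ u x) :
    (∀ x ∈ Set.Icc (0 : Fin d → ℝ) 1,
        rearrPerm π l x ≤ rearrPerm π f x ∧ rearrPerm π f x ≤ rearrPerm π u x) ∧
      (MonotoneOn f (Set.Icc (0 : Fin d → ℝ) 1) →
        ∀ᵐ x ∂(volume.restrict (Set.Icc (0 : Fin d → ℝ) 1)),
          rearrPerm π f x = f x) := by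
  obtain ⟨Ml, hMl⟩ := hlb
  obtain ⟨Mu, hMu⟩ := hub
  obtain ⟨Mf, hMf⟩ := hfb
  set L := List.ofFn fun i => π i
  refine ⟨fun x hx => ⟨rearrList_le_rearrList hMl hMf (fun z hz => (hcov z hz).1) L x hx,
    rearrList_le_rearrList hMf hMu (fun z hz => (hcov z hz).2) L x hx⟩, fun hmono => ?_⟩
  filter_upwards [ae_restrict_unitCube_mem_univ_pi_Ioc, hmono.ae_exists_strictlyBelow_gt hfm hMf]
    with x hx hsup
  refine le_antisymm (rearrList_le_self (hmono.mono univ_pi_Ioc_subset_Icc) hMf L hx) ?_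
  refine le_of_forall_lt fun y hy => ?_
  obtain ⟨x', hx', hlt, hyx'⟩ := hsup y hy
  exact hyx'.trans_le <| le_rearrList hmono hMf L hx' (fun k => (hlt k).le) (fun k _ => hlt k) hx

/-- Coverage preservation of rearranged confidence bands: if `ℓ ≤ f ≤ u`, then the
rearranged band covers the rearranged function; if moreover `f` is weakly
increasing, it equals its rearrangement a.e., so the rearranged band covers `f`. -/
theorem rearranged_band_coverage {d : ℕ} (π : Equiv.Perm (Fin d))
    (l u f : (Fin d → ℝ) → ℝ)
    (hlm : Measurable l) (hum : Measurable u) (hfm : Measurable f)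
    (hlb : ∃ M : ℝ, ∀ x ∈ Set.Icc (0 : Fin d → ℝ) 1, |l x| ≤ M)
    (hub : ∃ M : ℝ, ∀ x ∈ Set.Icc (0 : Fin d → ℝ) 1, |u x| ≤ M)
    (hfb : ∃ M : ℝ, ∀ x ∈ Set.Icc (0 : Fin d → ℝ) 1, |f x| ≤ M)
    (hcov : ∀ x ∈ Set.Icc (0 : Fin d → ℝ) 1, l x ≤ f x ∧ f x ≤ u x) :
    (∀ x ∈ Set.Icc (0 : Fin d → ℝ) 1,
        rearrPerm π l x ≤ rearrPerm π f x ∧ rearrPerm π f x ≤ rearrPerm π u x) ∧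
      (MonotoneOn f (Set.Icc (0 : Fin d → ℝ) 1) →
        ∀ᵐ x ∂(volume.restrict (Set.Icc (0 : Fin d → ℝ) 1)),
          rearrPerm π f x = f x) :=
  rearranged_band_coverage_general π l u f hfm hlb hub hfb hcov
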